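/- (Theorem 1, GUUB) Let ξ, η : ℝ → ℝ⁴ be differentiable on [0,∞), z₁(t) = (ξ(t), η(t)) ∈ ℝ⁸, and let M : ℝ → Matrix (Fin 4) (Fin 4) ℝ be differentiable with each M(t) symmetric and c_m‖x‖² ≤ xᵀM(t)x ≤ c_M‖x‖² for all x ∈ ℝ⁴ (0 < c_m ≤ c_M). Let C, B : ℝ → Matrix (Fin 4) (Fin 4) ℝ satisfy η(t)ᵀ(½M'(t) − C(t))η(t) = 0 and xᵀB(t)x ≥ B̲‖x‖² for all x ∈ ℝ⁴ with B̲ ≥ 1/4. Let χ : ℝ → ℝ⁴ satisfy ‖χ(t)‖ ≤ ρ(‖z₁(t)‖) where ρ(s) = ρ₁ + ρ₂ s + ρ₃ s², ρ₁, ρ₂, ρ₃ ≥ 0. Suppose for gains α, k₁, ε > 0 the closed-loop equations ξ'(t) = η(t) − α ξ(t) and M(t)η'(t) = χ(t) − C(t)η(t) − ξ(t) − B(t)(k₁ η(t) + (1/ε) ρ(‖z₁(t)‖)² η(t)) hold for t ≥ 0. Then the Lyapunov function V(t) = ½‖ξ(t)‖² + ½η(t)ᵀM(t)η(t) satisfies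 V(t) ≤ V(0) e^{−δ t} + (ε/δ)(1 − e^{−δ t}) for all t ≥ 0, where δ = min(α, B̲ k₁)/b and b = max(1/2, c_M/2). -/

import Mathlib

/-- The quadratic form `xᵀ A x`. -/
noncomputable def quadForm (A : Matrix (Fin 4) (Fin 4) ℝ) (x : EuclideanSpace ℝ (Fin 4)) : ℝ :=
  ∑ i, ∑ j, x i * A i j * x j

/-- The action of a matrix on a vector of `EuclideanSpace ℝ (Fin 4)` (i.e. `A x`). -/
noncomputable def mulVecE (A : Matrix (Fin 4) (Fin 4) ℝ) (x : EuclideanSpace ℝ (Fin 4)) :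
    EuclideanSpace ℝ (Fin 4) :=
  (EuclideanSpace.equiv (Fin 4) ℝ).symm (A.mulVec ((EuclideanSpace.equiv (Fin 4) ℝ) x))

/-- The stacked vector `z = (x, y) ∈ ℝ⁸` with `‖z‖² = ‖x‖² + ‖y‖²`. -/
noncomputable def stack (x y : EuclideanSpace ℝ (Fin 4)) :
    WithLp 2 (EuclideanSpace ℝ (Fin 4) × EuclideanSpace ℝ (Fin 4)) :=
  (WithLp.equiv 2 _).symm (x, y)

/-!
Along closed-loop trajectories the cross terms `±⟪ξ, η⟫` cancel and the skew-symmetry of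
`½Ṁ - C` removes the inertia terms, so `V̇ = -α‖ξ‖² + ⟪η, χ⟫ - (k₁ + ρ²/ε) ηᵀBη`. Young's
inequality with `B̲ ≥ 1/4` absorbs the disturbance `⟪η, χ⟫ ≤ ‖η‖ρ` into `(ρ²/ε) ηᵀBη` up to `ε`,
and `V ≤ b (‖ξ‖² + ‖η‖²)` turns the remaining damping into `V̇ ≤ -δV + ε`; Grönwall's inequality
then gives the bound.
-/

open Real
open scoped RealInnerProductSpace

local notation "E⁴" => EuclideanSpace ℝ (Fin 4)

section QuadForm

variable (A B : Matrix (Fin 4) (Fin 4) ℝ)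

lemma inner_mulVecE (x y : E⁴) : ⟪y, mulVecE A x⟫ = ∑ i, ∑ j, y i * A i j * x j := by
  rw [show ⟪y, mulVecE A x⟫ = ∑ i, y i * mulVecE A x i by simp [PiLp.inner_apply, mul_comm]]
  simp [mulVecE, Matrix.mulVec, dotProduct, Finset.mul_sum, mul_assoc]

lemma quadForm_eq_inner (x : E⁴) : quadForm A x = ⟪x, mulVecE A x⟫ :=
  (inner_mulVecE A x x).symm

lemma quadForm_smul_sub (c : ℝ) (x : E⁴) :
    quadForm (c • A - B) x = c * quadForm A x - quadForm B x := by
  simp only [quadForm, Finset.mul_sum, ← Finset.sum_sub_distrib, Matrix.sub_apply,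
    Matrix.smul_apply, smul_eq_mul]
  congr 1; ext i; congr 1; ext j; ring

lemma mulVecE_smul (c : ℝ) (x : E⁴) : mulVecE A (c • x) = c • mulVecE A x := by
  ext i
  simp [mulVecE, Matrix.mulVec_smul]

end QuadForm

lemma Matrix.IsSymm.bilin_comm {A : Matrix (Fin 4) (Fin 4) ℝ} (hA : A.IsSymm) (u v : E⁴) :
    ∑ i, ∑ j, u i * A i j * v j = ∑ i, ∑ j, v i * A i j * u j := by
  rw [Finset.sum_comm]
  refine Finset.sum_congr rfl fun j _ => Finset.sum_congr rfl fun i _ => ?_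
  rw [← hA.apply i j]; ring

lemma half_sq_add_half_quadForm_le {A : Matrix (Fin 4) (Fin 4) ℝ} {c : ℝ}
    (hA : ∀ y : E⁴, quadForm A y ≤ c * ‖y‖ ^ 2) (x y : E⁴) :
    (1 / 2) * ‖x‖ ^ 2 + (1 / 2) * quadForm A y ≤ max (1 / 2) (c / 2) * (‖x‖ ^ 2 + ‖y‖ ^ 2) := by
  have := hA y
  nlinarith [le_max_left (1 / 2 : ℝ) (c / 2), le_max_right (1 / 2 : ℝ) (c / 2),
    sq_nonneg ‖x‖, sq_nonneg ‖y‖]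

/-- Symmetry of `M t` merges the two terms `y'ᵀ M y` and `yᵀ M y'` of the product rule. -/
theorem hasDerivAt_quadForm {M : ℝ → Matrix (Fin 4) (Fin 4) ℝ} {M' : Matrix (Fin 4) (Fin 4) ℝ}
    {y : ℝ → E⁴} {y' : E⁴} {t : ℝ} (hM : ∀ i j, HasDerivAt (fun s => M s i j) (M' i j) t)
    (hy : HasDerivAt y y' t) (hsymm : (M t).IsSymm) :
    HasDerivAt (fun s => quadForm (M s) (y s)) (2 * ⟪y t, mulVecE (M t) y'⟫ + quadForm M' (y t))
      t := by
  have hcoord (i : Fin 4) : HasDerivAt (fun s => y s i) (y' i) t :=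
    (EuclideanSpace.proj (𝕜 := ℝ) i).hasFDerivAt.comp_hasDerivAt t hy
  have hsum : HasDerivAt (fun s => quadForm (M s) (y s))
      (∑ i, ∑ j, ((y' i * M t i j + y t i * M' i j) * y t j + y t i * M t i j * y' j)) t := by
    unfold quadForm
    exact HasDerivAt.fun_sum fun i _ => HasDerivAt.fun_sum fun j _ =>
      ((hcoord i).mul (hM i j)).mul (hcoord j)
  refine hsum.congr_deriv ?_
  simp only [add_mul, Finset.sum_add_distrib]
  rw [hsymm.bilin_comm y', inner_mulVecE, quadForm]
  ring

lemma self_le_mul_sq_div_add {β ε : ℝ} (hβ : 1 / 4 ≤ β) (hε : 0 < ε) (p : ℝ) :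
    p ≤ β * p ^ 2 / ε + ε := by
  have hsq : 0 ≤ (p - 2 * ε) ^ 2 / (4 * ε) := by positivity
  have hquarter : p ^ 2 / (4 * ε) ≤ β * p ^ 2 / ε := by
    rw [div_le_div_iff₀ (by positivity) hε]
    nlinarith [mul_nonneg (mul_nonneg (sub_nonneg.2 hβ) (sq_nonneg p)) hε.le]
  have hexpand : (p - 2 * ε) ^ 2 / (4 * ε) = p ^ 2 / (4 * ε) - p + ε := by
    field_simp
    ring
  linarith

/-- Mathlib's `gronwallBound` with rate `K = -δ`. -/
theorem le_exp_decay_of_hasDerivAt_le {f f' : ℝ → ℝ} {δ ε : ℝ} (hδ : δ ≠ 0)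
    (hf : ∀ t, 0 ≤ t → HasDerivAt f (f' t) t) (bound : ∀ t, 0 ≤ t → f' t ≤ -δ * f t + ε) :
    ∀ t, 0 ≤ t → f t ≤ f 0 * exp (-δ * t) + (ε / δ) * (1 - exp (-δ * t)) := by
  intro t ht
  have hgron := le_gronwallBound_of_liminf_deriv_right_le (a := 0) (b := t) (δ := f 0)
    (fun s hs => (hf s hs.1).continuousAt.continuousWithinAt)
    (fun s hs _ hr => (hf s hs.1).hasDerivWithinAt.liminf_right_slope_le hr) le_rfl
    (fun s hs => bound s hs.1) t ⟨ht, le_rfl⟩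
  rw [gronwallBound_of_K_ne_0 (neg_ne_zero.2 hδ), sub_zero] at hgron
  convert hgron using 1
  simp only [div_neg]
  ring

section ClosedLoop

variable {M Md C B : Matrix (Fin 4) (Fin 4) ℝ} {x y x' y' w : E⁴} {α k₁ ε r Blo : ℝ}

lemma closedLoop_lyapunov_deriv_eq (hx' : x' = y - α • x)
    (hy' : mulVecE M y' = w - mulVecE C y - x - mulVecE B (k₁ • y + ((1 / ε) * r ^ 2) • y))
    (hskew : quadForm ((1 / 2 : ℝ) • Md - C) y = 0) :
    ⟪x, x'⟫ + ⟪y, mulVecE M y'⟫ + (1 / 2) * quadForm Md y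
      = -α * ‖x‖ ^ 2 + ⟪y, w⟫ - (k₁ + (1 / ε) * r ^ 2) * quadForm B y := by
  rw [quadForm_smul_sub] at hskew
  rw [hx', hy', ← add_smul, mulVecE_smul]
  simp only [inner_sub_right, real_inner_smul_right, real_inner_self_eq_norm_sq,
    ← quadForm_eq_inner, real_inner_comm x y]
  linarith

lemma closedLoop_lyapunov_deriv_le (hx' : x' = y - α • x)
    (hy' : mulVecE M y' = w - mulVecE C y - x - mulVecE B (k₁ • y + ((1 / ε) * r ^ 2) • y))
    (hskew : quadForm ((1 / 2 : ℝ) • Md - C) y = 0) (hw : ‖w‖ ≤ r)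
    (hB : Blo * ‖y‖ ^ 2 ≤ quadForm B y) (hBlo : 1 / 4 ≤ Blo) (hk₁ : 0 ≤ k₁) (hε : 0 < ε) :
    ⟪x, x'⟫ + ⟪y, mulVecE M y'⟫ + (1 / 2) * quadForm Md y
      ≤ -α * ‖x‖ ^ 2 - Blo * k₁ * ‖y‖ ^ 2 + ε := by
  rw [closedLoop_lyapunov_deriv_eq hx' hy' hskew]
  have hdist : ⟪y, w⟫ ≤ ‖y‖ * r :=
    (real_inner_le_norm y w).trans (mul_le_mul_of_nonneg_left hw (norm_nonneg y))
  have hdamp : (k₁ + (1 / ε) * r ^ 2) * (Blo * ‖y‖ ^ 2)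
      ≤ (k₁ + (1 / ε) * r ^ 2) * quadForm B y :=
    mul_le_mul_of_nonneg_left hB (by positivity)
  have hyoung := self_le_mul_sq_div_add hBlo hε (‖y‖ * r)
  have hrobust : Blo * (‖y‖ * r) ^ 2 / ε = (1 / ε) * r ^ 2 * (Blo * ‖y‖ ^ 2) := by ring
  nlinarith

end ClosedLoop

lemma neg_add_le_neg_min_div_mul {a c b p q V : ℝ} (ha : 0 < a) (hc : 0 < c) (hb : 0 < b)
    (hp : 0 ≤ p) (hq : 0 ≤ q) (hV : V ≤ b * (p + q)) :
    -a * p - c * q ≤ -(min a c / b) * V := by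
  have hmin : 0 ≤ min a c / b := by positivity
  calc -a * p - c * q ≤ -(min a c * (p + q)) := by
        nlinarith [min_le_left a c, min_le_right a c]
    _ = -(min a c / b * (b * (p + q))) := by field_simp
    _ ≤ -(min a c / b) * V := by nlinarith

theorem stmt4_general
    (ξ η ξd ηd : ℝ → EuclideanSpace ℝ (Fin 4))
    (hξ : ∀ t, 0 ≤ t → HasDerivAt ξ (ξd t) t) (hη : ∀ t, 0 ≤ t → HasDerivAt η (ηd t) t)
    (z₁ : ℝ → WithLp 2 (EuclideanSpace ℝ (Fin 4) × EuclideanSpace ℝ (Fin 4)))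
    (c_M : ℝ)
    (M Md : ℝ → Matrix (Fin 4) (Fin 4) ℝ)
    (hM : ∀ (i j : Fin 4) (t : ℝ), 0 ≤ t → HasDerivAt (fun s => M s i j) (Md t i j) t)
    (hMsymm : ∀ t, (M t).IsSymm)
    (hMhigh : ∀ t (x : EuclideanSpace ℝ (Fin 4)), quadForm (M t) x ≤ c_M * ‖x‖ ^ 2)
    (C B : ℝ → Matrix (Fin 4) (Fin 4) ℝ)
    (hskew : ∀ t, 0 ≤ t → quadForm ((1 / 2 : ℝ) • Md t - C t) (η t) = 0)
    (Blo : ℝ) (hBlo : (1 / 4 : ℝ) ≤ Blo)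
    (hB : ∀ t (x : EuclideanSpace ℝ (Fin 4)), Blo * ‖x‖ ^ 2 ≤ quadForm (B t) x)
    (ρ : ℝ → ℝ)
    (χ : ℝ → EuclideanSpace ℝ (Fin 4)) (hχ : ∀ t, 0 ≤ t → ‖χ t‖ ≤ ρ ‖z₁ t‖)
    (α k₁ ε : ℝ) (hα : 0 < α) (hk₁ : 0 < k₁) (hε : 0 < ε)
    (hloop₁ : ∀ t, 0 ≤ t → ξd t = η t - α • ξ t)
    (hloop₂ : ∀ t, 0 ≤ t → mulVecE (M t) (ηd t)
      = χ t - mulVecE (C t) (η t) - ξ t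
        - mulVecE (B t) (k₁ • η t + ((1 / ε) * (ρ ‖z₁ t‖) ^ 2) • η t))
    (V : ℝ → ℝ)
    (hV : V = fun t => (1 / 2) * ‖ξ t‖ ^ 2 + (1 / 2) * quadForm (M t) (η t))
    (b δ : ℝ) (hb : b = max (1 / 2) (c_M / 2)) (hδ : δ = min α (Blo * k₁) / b) :
    ∀ t, 0 ≤ t →
      V t ≤ V 0 * Real.exp (-δ * t) + (ε / δ) * (1 - Real.exp (-δ * t)) := by
  have hb0 : 0 < b := hb ▸ lt_max_of_lt_left one_half_pos
  have hBk : 0 < Blo * k₁ := mul_pos (by linarith) hk₁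
  have hδ0 : δ ≠ 0 := hδ ▸ (div_pos (lt_min hα hBk) hb0).ne'
  refine le_exp_decay_of_hasDerivAt_le hδ0
    (f' := fun t => ⟪ξ t, ξd t⟫ + ⟪η t, mulVecE (M t) (ηd t)⟫ + (1 / 2) * quadForm (Md t) (η t))
    (fun t ht => ?deriv) (fun t ht => ?bound)
  case deriv =>
    subst hV
    refine (((hξ t ht).norm_sq.const_mul (1 / 2)).add
      ((hasDerivAt_quadForm (hM · · t ht) (hη t ht) (hMsymm t)).const_mul (1 / 2))).congr_deriv ?_
    ring
  case bound =>
    have hdecay : -α * ‖ξ t‖ ^ 2 - Blo * k₁ * ‖η t‖ ^ 2 ≤ -δ * V t := by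
      rw [hδ]
      refine neg_add_le_neg_min_div_mul hα hBk hb0 (sq_nonneg _) (sq_nonneg _) ?_
      rw [hV, hb]
      exact half_sq_add_half_quadForm_le (hMhigh t) (ξ t) (η t)
    linarith [closedLoop_lyapunov_deriv_le (hloop₁ t ht) (hloop₂ t ht) (hskew t ht) (hχ t ht)
      (hB t (η t)) hBlo hk₁.le hε]

/-- Theorem 1, GUUB: the joint-layer Lyapunov function satisfies
`V(t) ≤ V(0)e^{−δt} + (ε/δ)(1 − e^{−δt})` for all `t ≥ 0`. -/
theorem stmt4
    (ξ η ξd ηd : ℝ → EuclideanSpace ℝ (Fin 4))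
    (hξ : ∀ t, 0 ≤ t → HasDerivAt ξ (ξd t) t) (hη : ∀ t, 0 ≤ t → HasDerivAt η (ηd t) t)
    (z₁ : ℝ → WithLp 2 (EuclideanSpace ℝ (Fin 4) × EuclideanSpace ℝ (Fin 4)))
    (hz₁ : z₁ = fun t => stack (ξ t) (η t))
    (c_m c_M : ℝ) (hcm : 0 < c_m) (hcmM : c_m ≤ c_M)
    (M Md : ℝ → Matrix (Fin 4) (Fin 4) ℝ)
    (hM : ∀ (i j : Fin 4) (t : ℝ), 0 ≤ t → HasDerivAt (fun s => M s i j) (Md t i j) t)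
    (hMsymm : ∀ t, (M t).IsSymm)
    (hMlow : ∀ t (x : EuclideanSpace ℝ (Fin 4)), c_m * ‖x‖ ^ 2 ≤ quadForm (M t) x)
    (hMhigh : ∀ t (x : EuclideanSpace ℝ (Fin 4)), quadForm (M t) x ≤ c_M * ‖x‖ ^ 2)
    (C B : ℝ → Matrix (Fin 4) (Fin 4) ℝ)
    (hskew : ∀ t, 0 ≤ t → quadForm ((1 / 2 : ℝ) • Md t - C t) (η t) = 0)
    (Blo : ℝ) (hBlo : (1 / 4 : ℝ) ≤ Blo)
    (hB : ∀ t (x : EuclideanSpace ℝ (Fin 4)), Blo * ‖x‖ ^ 2 ≤ quadForm (B t) x)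
    (ρ₁ ρ₂ ρ₃ : ℝ) (hρ₁ : 0 ≤ ρ₁) (hρ₂ : 0 ≤ ρ₂) (hρ₃ : 0 ≤ ρ₃)
    (ρ : ℝ → ℝ) (hρ : ρ = fun s => ρ₁ + ρ₂ * s + ρ₃ * s ^ 2)
    (χ : ℝ → EuclideanSpace ℝ (Fin 4)) (hχ : ∀ t, 0 ≤ t → ‖χ t‖ ≤ ρ ‖z₁ t‖)
    (α k₁ ε : ℝ) (hα : 0 < α) (hk₁ : 0 < k₁) (hε : 0 < ε)
    (hloop₁ : ∀ t, 0 ≤ t → ξd t = η t - α • ξ t)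
    (hloop₂ : ∀ t, 0 ≤ t → mulVecE (M t) (ηd t)
      = χ t - mulVecE (C t) (η t) - ξ t
        - mulVecE (B t) (k₁ • η t + ((1 / ε) * (ρ ‖z₁ t‖) ^ 2) • η t))
    (V : ℝ → ℝ)
    (hV : V = fun t => (1 / 2) * ‖ξ t‖ ^ 2 + (1 / 2) * quadForm (M t) (η t))
    (b δ : ℝ) (hb : b = max (1 / 2) (c_M / 2)) (hδ : δ = min α (Blo * k₁) / b) :
    ∀ t, 0 ≤ t →
      V t ≤ V 0 * Real.exp (-δ * t) + (ε / δ) * (1 - Real.exp (-δ * t)) :=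
  stmt4_general ξ η ξd ηd hξ hη z₁ c_M M Md hM hMsymm hMhigh C B hskew Blo hBlo hB ρ χ hχ α k₁ ε hα
    hk₁ hε hloop₁ hloop₂ V hV b δ hb hδ
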